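/- arXiv:1701.01047 — 2 statements merged into one kernel-verified Lean document; each statement's English description precedes it below -/
import Mathlib

section
/- Let n be a positive integer and let f(t) = a_0 + a_1 t + ⋯ + a_{n+1} t^{n+1} be a polynomial with complex coefficients of degree at most n+1. Then for every complex number λ with λ ∉ {0, 1, 2, ..., n}, one has ∑_{k=0}^{n} C(n,k) (-1)^k f(k)/(k-λ) = f(λ) · ∑_{k=0}^{n} C(n,k) (-1)^k/(k-λ) + (-1)^n n! a_{n+1}. -/
open Finset Nat

/-!
Divide by `t - λ`: `f = f(λ) + (t - λ) q` with `q = f /ₘ (X - C λ)` of degree at most `n` and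
`q_n = a_{n+1}`. The left side minus `f(λ) · ∑ C(n,k) (-1)^k / (k - λ)` is then
`∑ C(n,k) (-1)^k q(k) = (-1)^n Δⁿq(0) = (-1)^n n! q_n`, since the `n`-th forward difference of a
polynomial of degree at most `n` is the constant `n!` times its `n`-th coefficient.
-/

namespace Polynomial
open scoped fwdDiff

variable {R : Type*} [CommRing R]

theorem fwdDiff_iter_eval_eq_factorial_mul_coeff {P : R[X]} {n : ℕ} (hP : P.natDegree ≤ n)
    (x : R) : (Δ_[1])^[n] P.eval x = n ! * P.coeff n := by
  rcases hP.lt_or_eq with hlt | rfl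
  · simp [fwdDiff_iter_eq_zero_of_degree_lt hlt, coeff_eq_zero_of_natDegree_lt hlt]
  · rw [fwdDiff_iter_degree_eq_factorial]
    simp only [Pi.smul_apply, Pi.natCast_apply, smul_eq_mul, leadingCoeff, mul_comm]

theorem sum_range_choose_mul_neg_one_pow_mul_eval {P : R[X]} {n : ℕ} (hP : P.natDegree ≤ n) :
    ∑ k ∈ range (n + 1), (n.choose k : R) * (-1) ^ k * P.eval (k : R) =
      (-1) ^ n * n ! * P.coeff n := by
  rw [mul_assoc, ← fwdDiff_iter_eval_eq_factorial_mul_coeff hP 0, fwdDiff_iter_eq_sum_shift,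
    mul_sum]
  refine sum_congr rfl fun k hk => ?_
  obtain ⟨j, rfl⟩ := Nat.exists_eq_add_of_le (mem_range_succ_iff.mp hk)
  have hsq : (-1 : R) ^ j * (-1) ^ j = 1 := by
    rw [← pow_add, ← two_mul, pow_mul, neg_one_sq, one_pow]
  rw [add_tsub_cancel_left, zero_add, nsmul_one, zsmul_eq_mul, pow_add]
  push_cast
  linear_combination -((k + j).choose k * (-1) ^ k * P.eval (k : R)) * hsq

theorem eval_eq_eval_add_mul_eval_divByMonic (P : R[X]) (a x : R) :
    P.eval x = P.eval a + (x - a) * (P /ₘ (X - C a)).eval x := by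
  conv_lhs => rw [← modByMonic_add_div P (X - C a)]
  simp [modByMonic_X_sub_C_eq_C_eval]

theorem natDegree_divByMonic_X_sub_C_le {P : R[X]} {n : ℕ} (hP : P.natDegree ≤ n + 1) (a : R) :
    (P /ₘ (X - C a)).natDegree ≤ n := by
  nontriviality R
  rw [natDegree_divByMonic _ (monic_X_sub_C a), natDegree_X_sub_C]
  omega

theorem coeff_divByMonic_X_sub_C_of_natDegree_le {P : R[X]} {n : ℕ} (hP : P.natDegree ≤ n + 1)
    (a : R) : (P /ₘ (X - C a)).coeff n = P.coeff (n + 1) := by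
  rw [coeff_divByMonic_X_sub_C_rec, coeff_eq_zero_of_natDegree_lt
    ((natDegree_divByMonic_X_sub_C_le hP a).trans_lt n.lt_succ_self), mul_zero, add_zero]

theorem sum_mul_eval_div_sub {K ι : Type*} [Field K] (s : Finset ι) (w x : ι → K)
    (P : K[X]) (a : K) (hx : ∀ k ∈ s, x k ≠ a) :
    ∑ k ∈ s, w k * P.eval (x k) / (x k - a) =
      P.eval a * ∑ k ∈ s, w k / (x k - a) + ∑ k ∈ s, w k * (P /ₘ (X - C a)).eval (x k) := by
  rw [mul_sum, ← sum_add_distrib]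
  refine sum_congr rfl fun k hk => ?_
  have hxa : x k - a ≠ 0 := sub_ne_zero.mpr (hx k hk)
  rw [eval_eq_eval_add_mul_eval_divByMonic P a (x k)]
  field_simp

end Polynomial

theorem melzak_deg_n_add_one_general (n : ℕ) (f : Polynomial ℂ)
    (hf : f.natDegree ≤ n + 1) (l : ℂ) (hl : ∀ k ∈ Finset.range (n + 1), l ≠ k) :
    ∑ k ∈ Finset.range (n + 1), (n.choose k : ℂ) * (-1) ^ k * f.eval (k : ℂ) / ((k : ℂ) - l) =
      f.eval l * ∑ k ∈ Finset.range (n + 1), (n.choose k : ℂ) * (-1) ^ k / ((k : ℂ) - l) +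
        (-1) ^ n * (n ! : ℂ) * f.coeff (n + 1) := by
  rw [Polynomial.sum_mul_eval_div_sub _ _ _ f l fun k hk => (hl k hk).symm,
    Polynomial.sum_range_choose_mul_neg_one_pow_mul_eval
      (Polynomial.natDegree_divByMonic_X_sub_C_le hf l),
    Polynomial.coeff_divByMonic_X_sub_C_of_natDegree_le hf]

theorem melzak_deg_n_add_one (n : ℕ) (hn : 0 < n) (f : Polynomial ℂ)
    (hf : f.natDegree ≤ n + 1) (l : ℂ) (hl : ∀ k ∈ Finset.range (n + 1), l ≠ k) :
    ∑ k ∈ Finset.range (n + 1), (n.choose k : ℂ) * (-1) ^ k * f.eval (k : ℂ) / ((k : ℂ) - l) =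
      f.eval l * ∑ k ∈ Finset.range (n + 1), (n.choose k : ℂ) * (-1) ^ k / ((k : ℂ) - l) +
        (-1) ^ n * (n ! : ℂ) * f.coeff (n + 1) :=
  melzak_deg_n_add_one_general n f hf l hl
end

section
/- Let f(t) = a_0 + a_1 t + ⋯ + a_M t^M be a polynomial with complex coefficients. Then for every positive integer n, one has ∑_{k=1}^{n} C(n,k) (-1)^{k-1} f(k)/k = f'(0) + f(0) H_n + (-1)^{n-1} n! ∑_{m=n+1}^{M} a_m S(m-1, n), where the last sum is empty (equal to zero) when M ≤ n. -/
/-!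
Both sides are linear in `f`, so it suffices to evaluate the left side on the monomials `t ^ m`.
For `m ≥ 1` it is, up to sign and the missing term `k = 0`, the alternating power sum
`∑ₖ (-1)^k C(n,k) k^(m-1) = (-1)^n n! S(m-1,n)`, which follows by induction on the exponent from
`k C(n+1,k) = (n+1) (C(n+1,k) - C(n,k))` and the recurrence of `S`. For `m = 0` the same identity
for binomial coefficients turns the step `n → n+1` into `1/(n+1)` times the case `m = 1`, which
is `1`; summing gives `H_n`.
-/

open Finset Nat

/-- Stirling numbers of the second kind. -/
def stirling2 : ℕ → ℕ → ℕ
  | 0, 0 => 1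
  | 0, _ + 1 => 0
  | _ + 1, 0 => 0
  | p + 1, k + 1 => (k + 1) * stirling2 p (k + 1) + stirling2 p k

theorem stirling2_eq_stirlingSecond : ∀ p n, stirling2 p n = stirlingSecond p n
  | 0, 0 | 0, _ + 1 | _ + 1, 0 => rfl
  | p + 1, k + 1 => by
    rw [stirling2, stirlingSecond_succ_succ, stirling2_eq_stirlingSecond p,
      stirling2_eq_stirlingSecond p]

section CommRing

variable {R : Type*} [CommRing R]

theorem natCast_mul_succ_choose (n k : ℕ) :
    (k : R) * (n + 1).choose k = (n + 1) * ((n + 1).choose k - n.choose k) := by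
  cases k with
  | zero => simp
  | succ k =>
    have h : ((n : R) + 1) * n.choose k = (n + 1).choose (k + 1) * ((k : R) + 1) := by
      exact_mod_cast congrArg (Nat.cast : ℕ → R) (add_one_mul_choose_eq n k)
    rw [choose_succ_succ'] at h ⊢
    push_cast at h ⊢
    linear_combination -h

theorem sum_range_neg_one_pow_mul_choose_mul_pow (p n : ℕ) :
    ∑ k ∈ range (n + 1), (-1 : R) ^ k * n.choose k * (k : R) ^ p =
      (-1) ^ n * n ! * stirlingSecond p n := by
  induction p generalizing n with
  | zero =>
    have h := add_pow (-1 : R) 1 n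
    simp only [neg_add_cancel, one_pow, mul_one] at h
    rcases n with _ | n <;> simp [← h]
  | succ p ih =>
    rcases n with _ | n
    · simp
    calc ∑ k ∈ range (n + 2), (-1 : R) ^ k * (n + 1).choose k * (k : R) ^ (p + 1)
        = (n + 1) * (∑ k ∈ range (n + 2), (-1 : R) ^ k * (n + 1).choose k * (k : R) ^ p -
            ∑ k ∈ range (n + 2), (-1 : R) ^ k * n.choose k * (k : R) ^ p) := by
          rw [← sum_sub_distrib, mul_sum]
          refine sum_congr rfl fun k _ => ?_
          linear_combination (-1 : R) ^ k * (k : R) ^ p * natCast_mul_succ_choose (R := R) n k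
      _ = (-1) ^ (n + 1) * (n + 1)! * stirlingSecond (p + 1) (n + 1) := by
          rw [ih, sum_range_succ (fun k => (-1 : R) ^ k * n.choose k * (k : R) ^ p) (n + 1),
            choose_succ_self, ih, stirlingSecond_succ_succ, factorial_succ]
          push_cast
          ring

theorem sum_Icc_choose_mul_neg_one_pow_mul_pow (m n : ℕ) :
    ∑ k ∈ Icc 1 n, (n.choose k : R) * (-1) ^ (k - 1) * (k : R) ^ m =
      (if m = 0 then 1 else 0) - (-1) ^ n * n ! * stirlingSecond m n := by
  rw [← sum_range_neg_one_pow_mul_choose_mul_pow, range_eq_Ico,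
    sum_eq_sum_Ico_succ_bot (by omega), zero_add, Ico_add_one_right_eq_Icc]
  simp only [pow_zero, choose_zero_right, cast_zero, cast_one, one_mul, zero_pow_eq]
  rw [sub_add_cancel_left, ← sum_neg_distrib]
  refine sum_congr rfl fun k hk => ?_
  obtain ⟨j, rfl⟩ := Nat.exists_eq_add_of_le' (mem_Icc.1 hk).1
  simp only [add_tsub_cancel_right, pow_succ]
  ring

end CommRing

theorem Polynomial.sum_mul_eval_eq_sum_coeff_mul {R ι : Type*} [CommSemiring R] {f : Polynomial R}
    {N : ℕ} (hf : f.natDegree < N) (s : Finset ι) (w x : ι → R) :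
    ∑ i ∈ s, w i * f.eval (x i) = ∑ m ∈ range N, f.coeff m * ∑ i ∈ s, w i * x i ^ m := by
  simp_rw [Polynomial.eval_eq_sum_range' hf, mul_sum]
  rw [sum_comm]
  exact sum_congr rfl fun m _ => sum_congr rfl fun i _ => by ring

section Field

variable {K : Type*} [Field K] [CharZero K]

theorem sum_Icc_choose_mul_neg_one_pow_div (n : ℕ) :
    ∑ k ∈ Icc 1 n, (n.choose k : K) * (-1) ^ (k - 1) / k = ∑ i ∈ range n, 1 / ((i : K) + 1) := by
  induction n with
  | zero => simp
  | succ n ih =>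
    -- the factor `k ^ 0` makes the second sum the case `m = 0` of
    -- `sum_Icc_choose_mul_neg_one_pow_mul_pow`, which equals `1`
    have hpascal : ∀ k ∈ Icc 1 (n + 1), ((n + 1).choose k : K) * (-1) ^ (k - 1) / k =
        (n.choose k : K) * (-1) ^ (k - 1) / k +
          ((n + 1).choose k : K) * (-1) ^ (k - 1) * (k : K) ^ 0 / (n + 1) := by
      intro k hk
      have hk0 : (k : K) ≠ 0 := by exact_mod_cast Nat.one_le_iff_ne_zero.mp (mem_Icc.1 hk).1
      field_simp
      linear_combination -natCast_mul_succ_choose (R := K) n k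
    rw [sum_congr rfl hpascal, sum_add_distrib, sum_Icc_succ_top (by omega), choose_succ_self,
      ← sum_div, sum_Icc_choose_mul_neg_one_pow_mul_pow, ih, sum_range_succ]
    simp [stirlingSecond_eq_zero_of_lt]

theorem sum_Icc_choose_mul_neg_one_pow_div_mul_pow_succ (m n : ℕ) :
    ∑ k ∈ Icc 1 n, (n.choose k : K) * (-1) ^ (k - 1) / k * (k : K) ^ (m + 1) =
      (if m = 0 then 1 else 0) - (-1) ^ n * n ! * stirlingSecond m n := by
  rw [← sum_Icc_choose_mul_neg_one_pow_mul_pow]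
  refine sum_congr rfl fun k hk => ?_
  have hk0 : (k : K) ≠ 0 := by exact_mod_cast Nat.one_le_iff_ne_zero.mp (mem_Icc.1 hk).1
  field_simp
  ring

theorem sum_Icc_choose_mul_neg_one_pow_mul_eval_div {f : Polynomial K} {M : ℕ}
    (hf : f.natDegree ≤ M) (n : ℕ) :
    ∑ k ∈ Icc 1 n, (n.choose k : K) * (-1) ^ (k - 1) * f.eval (k : K) / k =
      f.coeff 1 + f.coeff 0 * ∑ i ∈ range n, 1 / ((i : K) + 1) -
        (-1) ^ n * n ! * ∑ m ∈ range (M + 1), f.coeff (m + 1) * stirlingSecond m n := by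
  calc _ = ∑ k ∈ Icc 1 n, (n.choose k : K) * (-1) ^ (k - 1) / k * f.eval (k : K) :=
        sum_congr rfl fun k _ => mul_div_right_comm _ _ _
    _ = ∑ m ∈ range (M + 2),
          f.coeff m * ∑ k ∈ Icc 1 n, (n.choose k : K) * (-1) ^ (k - 1) / k * (k : K) ^ m :=
        Polynomial.sum_mul_eval_eq_sum_coeff_mul (by omega) _ _ _
    _ = f.coeff 0 * ∑ i ∈ range n, 1 / ((i : K) + 1) +
          ∑ m ∈ range (M + 1), f.coeff (m + 1) *
            ((if m = 0 then 1 else 0) - (-1) ^ n * n ! * stirlingSecond m n) := by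
        simp_rw [sum_range_succ' _ (M + 1), pow_zero, mul_one, sum_Icc_choose_mul_neg_one_pow_div,
          sum_Icc_choose_mul_neg_one_pow_div_mul_pow_succ, add_comm]
    _ = _ := by
        simp_rw [mul_sub, sum_sub_distrib, mul_ite, mul_one, mul_zero, sum_ite_eq',
          if_pos (mem_range.2 (succ_pos M)), mul_sum, mul_left_comm (f.coeff _)]
        ring

end Field

theorem sum_range_mul_stirlingSecond_eq_sum_Icc {R : Type*} [Semiring R] {M : ℕ} (c : ℕ → R)
    (hc : ∀ m, M < m → c m = 0) (n : ℕ) :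
    ∑ m ∈ range (M + 1), c (m + 1) * stirlingSecond m n =
      ∑ m ∈ Icc (n + 1) M, c m * stirlingSecond (m - 1) n := by
  have hshift := sum_Ico_add' (fun m => c m * stirlingSecond (m - 1) n) 0 (M + 1) 1
  simp only [add_tsub_cancel_right, zero_add] at hshift
  rw [range_eq_Ico, hshift]
  refine (sum_subset (fun m hm => ?_) fun m hm hm' => ?_).symm
  · simp only [mem_Icc, mem_Ico] at hm ⊢
    omega
  · simp only [mem_Icc, mem_Ico, not_and_or, not_le] at hm hm'
    rcases hm' with hm' | hm'
    · rw [stirlingSecond_eq_zero_of_lt (by omega), cast_zero, mul_zero]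
    · rw [hc m hm', zero_mul]

theorem melzak_harmonic_general (n : ℕ) (hn : 0 < n) (M : ℕ) (f : Polynomial ℂ)
    (hf : f.natDegree ≤ M) :
    ∑ k ∈ Finset.Icc 1 n, (n.choose k : ℂ) * (-1) ^ (k - 1) * f.eval (k : ℂ) / (k : ℂ) =
      f.derivative.eval 0 + f.eval 0 * ∑ i ∈ Finset.range n, (1 : ℂ) / (i + 1) +
        (-1) ^ (n - 1) * (n ! : ℂ) *
          ∑ m ∈ Finset.Icc (n + 1) M, f.coeff m * (stirling2 (m - 1) n : ℂ) := by
  have hcoeff (m : ℕ) (hm : M < m) : f.coeff m = 0 :=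
    f.coeff_eq_zero_of_natDegree_lt (hf.trans_lt hm)
  have hderiv : f.derivative.eval 0 = f.coeff 1 := by
    simp [← Polynomial.coeff_zero_eq_eval_zero, Polynomial.coeff_derivative]
  have hsign : (-1 : ℂ) ^ (n - 1) = -(-1) ^ n := by
    obtain ⟨n, rfl⟩ := Nat.exists_eq_add_of_le' hn
    simp [pow_succ]
  simp_rw [sum_Icc_choose_mul_neg_one_pow_mul_eval_div hf, stirling2_eq_stirlingSecond,
    ← sum_range_mul_stirlingSecond_eq_sum_Icc _ hcoeff, hderiv, hsign,
    Polynomial.coeff_zero_eq_eval_zero]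
  ring
end
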